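/- arXiv:2107.03975 — 3 statements merged into one kernel-verified Lean document; each statement's English description precedes it below -/
import Mathlib

section
/- Let p > 0 and let ν be a probability measure on ℝ with 0 < ∫_ℝ |x|^p dν(x) < ∞. Then the approximation error function f_{p,ν} satisfies: f_{p,ν}(r) = 0 for every r ∈ [1 − ν({0}), 1]; lim_{r→0⁺} f_{p,ν}(r) = 1; the range of f_{p,ν} on (0,1] is exactly [0,1); and the preimage f_{p,ν}^{-1}((0,1)) equals the interval (0, 1 − ν({0})). -/
open MeasureTheory Filter Set
open scoped ENNReal Topology Classical

noncomputable section

/-- Left shift on real sequences. -/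
def shift : (ℕ → ℝ) → (ℕ → ℝ) := fun x n => x (n + 1)

/-- First `n` coordinates of a sequence. -/
def proj (n : ℕ) (x : ℕ → ℝ) : Fin n → ℝ := fun i => x i

/-- Best `k`-term `ℓp`-approximation error of `x ∈ ℝ^n`. -/
def sigmaP (p : ℝ) (n k : ℕ) (x : Fin n → ℝ) : ℝ :=
  sInf {e : ℝ | ∃ S : Finset (Fin n), S.card = k ∧ e = (∑ i ∈ Sᶜ, |x i| ^ p) ^ (1 / p)}

/-- Relative best `k`-term `ℓp`-approximation error. -/
def sigmaTilde (p : ℝ) (n k : ℕ) (x : Fin n → ℝ) : ℝ :=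
  sigmaP p n k x / (∑ i, |x i| ^ p) ^ (1 / p)

/-- The set `A^{n,k}_d` of vectors with relative approximation error at most `d`. -/
def Ad (p : ℝ) (n k : ℕ) (d : ℝ) : Set (Fin n → ℝ) := {x | sigmaTilde p n k x ≤ d}

/-- `μ_n`: law of the first `n` coordinates. -/
def lawn (μ : Measure (ℕ → ℝ)) (n : ℕ) : Measure (Fin n → ℝ) := μ.map (proj n)

/-- Strong `ℓp`-characterization with constant limiting function `f : (0,1] → [0,1]`. -/
def StrongLpChar (p : ℝ) (μ : Measure (ℕ → ℝ)) (f : ℝ → ℝ) : Prop :=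
  (∀ r ∈ Set.Ioc (0:ℝ) 1, f r ∈ Set.Icc (0:ℝ) 1) ∧
  ∀ r ∈ Set.Ioc (0:ℝ) 1, ∀ k : ℕ → ℕ,
    Tendsto (fun n : ℕ => (k n : ℝ) / n) atTop (𝓝 r) →
    ∀ᵐ x ∂μ, Tendsto (fun n : ℕ => sigmaTilde p n (k n) (proj n x)) atTop (𝓝 (f r))

/-- `κ̃_p(d, ε, μ_n)`. -/
def kappaP (p : ℝ) (μ : Measure (ℕ → ℝ)) (d ε : ℝ) (n : ℕ) : ℕ :=
  sInf {k : ℕ | 1 ≤ k ∧ k ≤ n ∧ 1 - ε ≤ (lawn μ n (Ad p n k d)).toReal}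

/-- `r̃⁺_p(d, ε, μ)`. -/
def rTildePlus (p : ℝ) (μ : Measure (ℕ → ℝ)) (d ε : ℝ) : ℝ :=
  Filter.limsup (fun n : ℕ => (kappaP p μ d ε n : ℝ) / n) atTop

/-- `r̃⁻_p(d, ε, μ)`. -/
def rTildeMinus (p : ℝ) (μ : Measure (ℕ → ℝ)) (d ε : ℝ) : ℝ :=
  Filter.liminf (fun n : ℕ => (kappaP p μ d ε n : ℝ) / n) atTop

/-- `(r, d)` is `ℓp`-achievable with probability `ε`. -/
def Achievable (p : ℝ) (μ : Measure (ℕ → ℝ)) (d ε r : ℝ) : Prop :=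
  ∃ k : ℕ → ℕ, Filter.limsup (fun n : ℕ => (k n : ℝ) / n) atTop ≤ r ∧
    1 - ε ≤ Filter.liminf (fun n : ℕ => (lawn μ n (Ad p n (k n) d)).toReal) atTop

/-- `r_p(d, ε, μ)`: the rate-approximation error function. -/
def rOp (p : ℝ) (μ : Measure (ℕ → ℝ)) (d ε : ℝ) : ℝ :=
  sInf {r : ℝ | r ∈ Set.Icc (0:ℝ) 1 ∧ Achievable p μ d ε r}

/-- `μ` is AMS with stationary mean `ν`. -/
def HasStationaryMean (μ ν : Measure (ℕ → ℝ)) : Prop :=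
  ∀ F : Set (ℕ → ℝ), MeasurableSet F →
    Tendsto (fun n : ℕ => (∑ i ∈ Finset.range n, (μ (shift^[i] ⁻¹' F)).toReal) / n)
      atTop (𝓝 (ν F).toReal)

/-- `μ` is asymptotically mean stationary. -/
def IsAMS (μ : Measure (ℕ → ℝ)) : Prop :=
  ∀ F : Set (ℕ → ℝ), MeasurableSet F →
    ∃ L : ℝ, Tendsto (fun n : ℕ => (∑ i ∈ Finset.range n, (μ (shift^[i] ⁻¹' F)).toReal) / n)
      atTop (𝓝 L)

/-- `ν` is stationary with respect to the shift. -/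
def IsStationaryShift (ν : Measure (ℕ → ℝ)) : Prop :=
  ∀ F : Set (ℕ → ℝ), MeasurableSet F → ν (shift ⁻¹' F) = ν F

/-- `μ` is ergodic with respect to the shift. -/
def IsErgodicShift (μ : Measure (ℕ → ℝ)) : Prop :=
  ∀ F : Set (ℕ → ℝ), MeasurableSet F → shift ⁻¹' F = F → μ F = 0 ∨ μ F = 1

/-- 1D marginal: the law of the first coordinate. -/
def marginal1 (ν : Measure (ℕ → ℝ)) : Measure ℝ := ν.map (fun x => x 0)

/-- The `p`-th absolute moment `∫ |x|^p dν` (as an extended real). -/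
def momentP (p : ℝ) (ν : Measure ℝ) : ℝ≥0∞ := ∫⁻ x, ENNReal.ofReal (|x| ^ p) ∂ν

/-- Tail set `B_τ = (−∞,−τ] ∪ [τ,∞)`. -/
def Btau (τ : ℝ) : Set ℝ := Set.Iic (-τ) ∪ Set.Ici τ

/-- Tail set `C_τ = (−∞,−τ) ∪ (τ,∞)`. -/
def Ctau (τ : ℝ) : Set ℝ := Set.Iio (-τ) ∪ Set.Ioi τ

/-- Tail distribution function `φ_ν(τ) = ν(B_τ)`. -/
def phiTail (ν : Measure ℝ) (τ : ℝ) : ℝ := (ν (Btau τ)).toReal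

/-- `v_p(B) = (∫_B |x|^p dν) / (∫_ℝ |x|^p dν)`. -/
def vP (p : ℝ) (ν : Measure ℝ) (B : Set ℝ) : ℝ :=
  ((∫⁻ x in B, ENNReal.ofReal (|x| ^ p) ∂ν) / momentP p ν).toReal

/-- The rate vs approximation error graph `F_ν`. -/
def Fgraph (p : ℝ) (ν : Measure ℝ) : Set (ℝ × ℝ) :=
  {q | ∃ τ : ℝ, 0 ≤ τ ∧ q = (phiTail ν τ, (1 - vP p ν (Btau τ)) ^ (1 / p))} ∪
  {q | ∃ τ : ℝ, 0 ≤ τ ∧ 0 < (ν ({-τ, τ} : Set ℝ)).toReal ∧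
       ∃ α ∈ Set.Ico (0:ℝ) 1,
         q = ((ν (Ctau τ)).toReal + α * (ν ({-τ, τ} : Set ℝ)).toReal,
              (1 - vP p ν (Ctau τ) - α * vP p ν ({-τ, τ} : Set ℝ)) ^ (1 / p))}

/-- Approximation error function `f_{p,ν} : (0,1] → [0,1)`, defined through its graph `F_ν`,
with the convention `f_{p,ν} ≡ 0` when the `p`-th moment of `ν` is infinite. -/
def fApprox (p : ℝ) (ν : Measure ℝ) (r : ℝ) : ℝ :=
  if momentP p ν = ∞ then 0 else sSup {d : ℝ | (r, d) ∈ Fgraph p ν}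

/-! Every point of the graph `F_ν` comes from a parameter `(τ, α) ∈ [0, ∞) × [0, 1]`: its rate
is the `ν`-mass of `C_τ` plus the fraction `α` of the mass of the atoms `±τ`, and `1 - d ^ p` is the
same combination for the measure `|x|^p dν`, normalized. Decreasing `τ` or increasing `α` adds mass
to both, and when no `ν`-mass is added no `|x|^p dν`-mass is added either; so `F_ν` is the graph of
a function, and all claims are read off from the two masses. The moment mass is the full moment
exactly when all mass off `0` is included, i.e. when `r ≥ 1 - ν {0}`; the two masses are positive
together; and since `|x|^p ≤ K^p` off `B_K`, the moment mass is at most `K^p r` plus the small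
moment mass of `B_K`, so it tends to `0` with `r`. -/

section

variable {p τ τ₁ τ₂ α α₁ α₂ : ℝ} {μ ν : Measure ℝ}

lemma mem_Btau {x : ℝ} : x ∈ Btau τ ↔ τ ≤ |x| := by
  rw [Btau, mem_union, mem_Iic, mem_Ici, le_abs', le_neg, or_comm]

lemma mem_Ctau {x : ℝ} : x ∈ Ctau τ ↔ τ < |x| := by
  rw [Ctau, mem_union, mem_Iio, mem_Ioi, lt_abs, lt_neg, or_comm]

lemma mem_pair_iff_abs_eq (hτ : 0 ≤ τ) {x : ℝ} : x ∈ ({-τ, τ} : Set ℝ) ↔ |x| = τ := by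
  rw [abs_eq hτ, mem_insert_iff, mem_singleton_iff, or_comm]

lemma measurableSet_Btau (τ : ℝ) : MeasurableSet (Btau τ) :=
  measurableSet_Iic.union measurableSet_Ici

lemma measurableSet_Ctau (τ : ℝ) : MeasurableSet (Ctau τ) :=
  measurableSet_Iio.union measurableSet_Ioi

lemma Btau_antitone : Antitone Btau := fun _ _ h _ hx =>
  mem_Btau.2 (h.trans (mem_Btau.1 hx))

lemma Btau_subset_Ctau (h : τ₁ < τ₂) : Btau τ₂ ⊆ Ctau τ₁ := fun _ hx =>
  mem_Ctau.2 (h.trans_le (mem_Btau.1 hx))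

lemma Btau_zero : Btau 0 = univ :=
  eq_univ_of_forall fun x => mem_Btau.2 (abs_nonneg x)

lemma Ctau_zero : Ctau 0 = {0}ᶜ := by
  ext x
  rw [mem_Ctau, abs_pos, mem_compl_singleton_iff]

lemma zero_notMem_Ctau (hτ : 0 ≤ τ) : (0 : ℝ) ∉ Ctau τ := by
  rw [mem_Ctau, abs_zero, not_lt]
  exact hτ

lemma Ctau_union_pair (hτ : 0 ≤ τ) : Ctau τ ∪ {-τ, τ} = Btau τ := by
  ext x
  rw [mem_union, mem_Ctau, mem_pair_iff_abs_eq hτ, mem_Btau, le_iff_lt_or_eq, eq_comm]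

lemma disjoint_Ctau_pair (hτ : 0 ≤ τ) : Disjoint (Ctau τ) {-τ, τ} :=
  disjoint_left.2 fun _ hC hp => (mem_Ctau.1 hC).ne (mem_pair_iff_abs_eq hτ |>.1 hp).symm

lemma iUnion_Btau_add_one_div (τ : ℝ) : ⋃ n : ℕ, Btau (τ + 1 / (n + 1)) = Ctau τ := by
  ext x
  simp only [mem_iUnion, mem_Btau, mem_Ctau]
  refine ⟨fun ⟨n, hn⟩ => lt_of_lt_of_le (by simp; positivity) hn, fun hx => ?_⟩
  obtain ⟨n, hn⟩ := exists_nat_one_div_lt (sub_pos.2 hx)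
  exact ⟨n, by linarith⟩

lemma iInter_Btau_sub_one_div (τ : ℝ) : ⋂ n : ℕ, Btau (τ - 1 / (n + 1)) = Btau τ := by
  ext x
  simp only [mem_iInter, mem_Btau]
  refine ⟨fun hx => ?_, fun hx n => le_trans (by simp; positivity) hx⟩
  have h := (tendsto_const_nhds (x := τ)).sub (tendsto_one_div_add_atTop_nhds_zero_nat (𝕜 := ℝ))
  rw [sub_zero] at h
  exact le_of_tendsto' h hx

lemma iInter_Btau : ⋂ K : ℝ, Btau K = ∅ :=
  eq_empty_of_forall_notMem fun x hx =>
    (lt_add_one |x|).not_ge (mem_Btau.1 (mem_iInter.1 hx (|x| + 1)))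

lemma exists_mem_Icc_add_mul_eq {a b r : ℝ} (h₁ : a ≤ r) (h₂ : r ≤ a + b) :
    ∃ θ ∈ Icc (0 : ℝ) 1, a + θ * b = r := by
  have hr : r ∈ segment ℝ a (a + b) := by
    rw [segment_eq_Icc (by linarith)]
    exact ⟨h₁, h₂⟩
  rw [segment_eq_image'] at hr
  simpa using hr

def tailMass (μ : Measure ℝ) (τ α : ℝ) : ℝ :=
  μ.real (Ctau τ) + α * μ.real {-τ, τ}

lemma tailMass_nonneg (hα : 0 ≤ α) : 0 ≤ tailMass μ τ α := by
  unfold tailMass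
  positivity

lemma tailMass_zero_left (α : ℝ) : tailMass μ 0 α = μ.real {0}ᶜ + α * μ.real {0} := by
  rw [tailMass, Ctau_zero, neg_zero, pair_eq_singleton]

section FiniteMeasure

variable [IsFiniteMeasure μ]

lemma measureReal_Btau (hτ : 0 ≤ τ) : μ.real (Btau τ) = μ.real (Ctau τ) + μ.real {-τ, τ} := by
  rw [← Ctau_union_pair hτ,
    measureReal_union (disjoint_Ctau_pair hτ) ((measurableSet_singleton τ).insert (-τ))]

lemma tailMass_one (hτ : 0 ≤ τ) : tailMass μ τ 1 = μ.real (Btau τ) := by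
  rw [tailMass, one_mul, measureReal_Btau hτ]

lemma tailMass_le_measureReal_Btau (hτ : 0 ≤ τ) (hα : α ≤ 1) :
    tailMass μ τ α ≤ μ.real (Btau τ) := by
  rw [← tailMass_one hτ, tailMass, tailMass]
  gcongr

lemma tailMass_le_measureReal_univ (hτ : 0 ≤ τ) (hα : α ≤ 1) : tailMass μ τ α ≤ μ.real univ :=
  (tailMass_le_measureReal_Btau hτ hα).trans (measureReal_mono (subset_univ _))

lemma tailMass_eq_add (h : τ₁ < τ₂) (hτ₂ : 0 ≤ τ₂) (α₁ α₂ : ℝ) :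
    tailMass μ τ₁ α₁ = tailMass μ τ₂ α₂ +
      (α₁ * μ.real {-τ₁, τ₁} + μ.real (Ctau τ₁ \ Btau τ₂) + (1 - α₂) * μ.real {-τ₂, τ₂}) := by
  have hB := measureReal_Btau (μ := μ) hτ₂
  have hdiff := measureReal_sdiff (μ := μ) (Btau_subset_Ctau h) (measurableSet_Btau τ₂)
  unfold tailMass
  linarith

lemma tailMass_le_tailMass_of_lt (h : τ₂ < τ₁) (hτ₁ : 0 ≤ τ₁) (hα₁ : α₁ ≤ 1) (hα₂ : 0 ≤ α₂) :
    tailMass μ τ₁ α₁ ≤ tailMass μ τ₂ α₂ := by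
  have hα₁' : 0 ≤ 1 - α₁ := sub_nonneg.2 hα₁
  rw [tailMass_eq_add h hτ₁ α₂ α₁]
  exact le_add_of_nonneg_right (by positivity)

lemma tendsto_measureReal_Btau_atTop : Tendsto (fun K => μ.real (Btau K)) atTop (𝓝 0) := by
  have h := tendsto_measure_iInter_atTop (μ := μ)
    (fun K => (measurableSet_Btau K).nullMeasurableSet) Btau_antitone ⟨0, measure_ne_top μ _⟩
  rw [iInter_Btau, measure_empty] at h
  exact (ENNReal.tendsto_toReal ENNReal.zero_ne_top).comp h

lemma exists_Ctau_le_le_Btau {c : ℝ} (hc : 0 < c) (hcμ : c ≤ μ.real univ) :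
    ∃ τ, 0 ≤ τ ∧ μ.real (Ctau τ) ≤ c ∧ c ≤ μ.real (Btau τ) := by
  set S := {τ : ℝ | 0 ≤ τ ∧ c ≤ μ.real (Btau τ)}
  have hS₀ : (0 : ℝ) ∈ S := ⟨le_rfl, by rwa [Btau_zero]⟩
  obtain ⟨K, hK⟩ := (tendsto_measureReal_Btau_atTop (μ := μ)).eventually (gt_mem_nhds hc) |>.exists
  have hSK : BddAbove S := ⟨K, fun τ hτ => le_of_not_gt fun hKτ =>
    (hτ.2.trans (measureReal_mono (Btau_antitone hKτ.le))).not_gt hK⟩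
  have hτ₀ : 0 ≤ sSup S := le_csSup hSK hS₀
  refine ⟨sSup S, hτ₀, ?_, ?_⟩
  · have h := tendsto_measure_iUnion_atTop (μ := μ)
      (s := fun n : ℕ => Btau (sSup S + 1 / (n + 1)))
      fun m n hmn => Btau_antitone (by gcongr)
    rw [iUnion_Btau_add_one_div] at h
    refine le_of_tendsto' ((ENNReal.tendsto_toReal (measure_ne_top μ _)).comp h) fun n => ?_
    have hn : sSup S < sSup S + 1 / (n + 1) := lt_add_of_pos_right _ (by positivity)
    exact (not_le.1 fun hle => (notMem_of_csSup_lt hn hSK) ⟨by positivity, hle⟩).le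
  · have h := tendsto_measure_iInter_atTop (μ := μ)
      (s := fun n : ℕ => Btau (sSup S - 1 / (n + 1)))
      (fun n => (measurableSet_Btau _).nullMeasurableSet)
      (fun m n hmn => Btau_antitone (by gcongr)) ⟨0, measure_ne_top μ _⟩
    rw [iInter_Btau_sub_one_div] at h
    refine ge_of_tendsto' ((ENNReal.tendsto_toReal (measure_ne_top μ _)).comp h) fun n => ?_
    obtain ⟨τ, hτS, hτ⟩ := exists_lt_of_lt_csSup ⟨0, hS₀⟩
      (sub_lt_self (sSup S) (by positivity : (0 : ℝ) < 1 / (n + 1)))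
    exact hτS.2.trans (measureReal_mono (Btau_antitone hτ.le))

lemma exists_tailMass_eq {c : ℝ} (hc : 0 < c) (hcμ : c ≤ μ.real univ) :
    ∃ τ, 0 ≤ τ ∧ ∃ α ∈ Icc (0 : ℝ) 1, tailMass μ τ α = c := by
  obtain ⟨τ, hτ, hC, hB⟩ := exists_Ctau_le_le_Btau hc hcμ
  rw [measureReal_Btau hτ] at hB
  exact ⟨τ, hτ, exists_mem_Icc_add_mul_eq hC hB⟩

end FiniteMeasure

def momentMeasure (p : ℝ) (ν : Measure ℝ) : Measure ℝ :=
  ν.withDensity fun x => ENNReal.ofReal (|x| ^ p)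

lemma momentMeasure_apply {s : Set ℝ} (hs : MeasurableSet s) :
    momentMeasure p ν s = ∫⁻ x in s, ENNReal.ofReal (|x| ^ p) ∂ν :=
  withDensity_apply _ hs

lemma momentMeasure_univ : momentMeasure p ν univ = momentP p ν := by
  rw [momentMeasure_apply MeasurableSet.univ, Measure.restrict_univ, momentP]

lemma momentMeasure_real_univ : (momentMeasure p ν).real univ = (momentP p ν).toReal := by
  rw [measureReal_def, momentMeasure_univ]

lemma isFiniteMeasure_momentMeasure (hfin : momentP p ν ≠ ∞) :
    IsFiniteMeasure (momentMeasure p ν) :=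
  ⟨by rwa [momentMeasure_univ, lt_top_iff_ne_top]⟩

lemma vP_eq {s : Set ℝ} (hs : MeasurableSet s) :
    vP p ν s = (momentMeasure p ν).real s / (momentP p ν).toReal := by
  rw [vP, ← momentMeasure_apply hs, ENNReal.toReal_div, measureReal_def]

lemma momentMeasure_singleton_zero (hp : 0 < p) : momentMeasure p ν {0} = 0 := by
  rw [momentMeasure_apply (measurableSet_singleton 0), lintegral_singleton, abs_zero,
    Real.zero_rpow hp.ne', ENNReal.ofReal_zero, zero_mul]

lemma momentMeasure_real_pair (hτ : 0 ≤ τ) :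
    (momentMeasure p ν).real {-τ, τ} = τ ^ p * ν.real {-τ, τ} := by
  have hs : MeasurableSet ({-τ, τ} : Set ℝ) := (measurableSet_singleton τ).insert (-τ)
  rw [measureReal_def, momentMeasure_apply hs,
    setLIntegral_congr_fun hs fun x hx => by rw [(mem_pair_iff_abs_eq hτ).1 hx],
    setLIntegral_const, ENNReal.toReal_mul, ENNReal.toReal_ofReal (by positivity), measureReal_def]

lemma momentMeasure_real_Ctau_zero (hp : 0 < p) (hfin : momentP p ν ≠ ∞) :
    (momentMeasure p ν).real (Ctau 0) = (momentP p ν).toReal := by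
  have := isFiniteMeasure_momentMeasure hfin
  rw [Ctau_zero, measureReal_compl (measurableSet_singleton 0), momentMeasure_real_univ,
    measureReal_def, momentMeasure_singleton_zero hp, ENNReal.toReal_zero, sub_zero]

lemma tailMass_momentMeasure_le_moment (hfin : momentP p ν ≠ ∞) (hτ : 0 ≤ τ) (hα : α ≤ 1) :
    tailMass (momentMeasure p ν) τ α ≤ (momentP p ν).toReal := by
  have := isFiniteMeasure_momentMeasure hfin
  exact momentMeasure_real_univ (p := p) (ν := ν) ▸ tailMass_le_measureReal_univ hτ hα

section FiniteMeasure

variable [IsFiniteMeasure ν]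

lemma momentMeasure_real_eq_zero {s : Set ℝ} (h : ν.real s = 0) :
    (momentMeasure p ν).real s = 0 := by
  rw [measureReal_eq_zero_iff] at h
  rw [measureReal_def, momentMeasure, withDensity_absolutelyContinuous ν _ h, ENNReal.toReal_zero]

lemma momentMeasure_real_pos (hfin : momentP p ν ≠ ∞) {s : Set ℝ} (h0 : (0 : ℝ) ∉ s)
    (h : 0 < ν.real s) : 0 < (momentMeasure p ν).real s := by
  have := isFiniteMeasure_momentMeasure hfin
  refine measureReal_nonneg.lt_of_ne' fun hρ => h.ne' ?_
  rw [measureReal_eq_zero_iff, momentMeasure, withDensity_apply_eq_zero (by fun_prop)] at hρ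
  rw [measureReal_eq_zero_iff]
  refine measure_mono_null (subset_inter (fun x hx => ?_) subset_rfl) hρ
  have hx0 : x ≠ 0 := fun hx0 => h0 (hx0 ▸ hx)
  simpa using Real.rpow_pos_of_pos (abs_pos.2 hx0) p

lemma momentMeasure_real_le (hp : 0 ≤ p) {K : ℝ} (hK : 0 ≤ K) {s : Set ℝ}
    (hs : MeasurableSet s) (hsK : ∀ x ∈ s, |x| ≤ K) :
    (momentMeasure p ν).real s ≤ K ^ p * ν.real s := by
  have hle : momentMeasure p ν s ≤ ENNReal.ofReal (K ^ p) * ν s := by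
    rw [momentMeasure_apply hs, ← setLIntegral_const]
    exact setLIntegral_mono measurable_const fun x hx =>
      ENNReal.ofReal_le_ofReal (Real.rpow_le_rpow (abs_nonneg x) (hsK x hx) hp)
  have := ENNReal.toReal_mono (by finiteness) hle
  rwa [ENNReal.toReal_mul, ENNReal.toReal_ofReal (by positivity)] at this

lemma tailMass_momentMeasure_le_of_le (hfin : momentP p ν ≠ ∞) (hτ₁ : 0 ≤ τ₁) (hτ₂ : 0 ≤ τ₂)
    (hα₁ : α₁ ∈ Icc (0 : ℝ) 1) (hα₂ : α₂ ∈ Icc (0 : ℝ) 1)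
    (h : tailMass ν τ₁ α₁ ≤ tailMass ν τ₂ α₂) :
    tailMass (momentMeasure p ν) τ₁ α₁ ≤ tailMass (momentMeasure p ν) τ₂ α₂ := by
  have := isFiniteMeasure_momentMeasure hfin
  rcases lt_trichotomy τ₁ τ₂ with hlt | rfl | hgt
  · -- `ν` puts no mass strictly between the two parameters, hence neither does `|x|^p dν`.
    have hν := tailMass_eq_add (μ := ν) hlt hτ₂ α₁ α₂
    have h₁ : 0 ≤ α₁ * ν.real {-τ₁, τ₁} := mul_nonneg hα₁.1 measureReal_nonneg
    have h₂ : 0 ≤ ν.real (Ctau τ₁ \ Btau τ₂) := measureReal_nonneg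
    have h₃ : 0 ≤ (1 - α₂) * ν.real {-τ₂, τ₂} := mul_nonneg (sub_nonneg.2 hα₂.2) measureReal_nonneg
    have e₁ : α₁ * ν.real {-τ₁, τ₁} = 0 := by linarith
    have e₃ : (1 - α₂) * ν.real {-τ₂, τ₂} = 0 := by linarith
    rw [tailMass_eq_add hlt hτ₂ α₁ α₂, momentMeasure_real_pair hτ₁, momentMeasure_real_pair hτ₂,
      momentMeasure_real_eq_zero (by linarith)]
    linear_combination τ₁ ^ p * e₁ + τ₂ ^ p * e₃
  · have hα : α₁ * ν.real {-τ₁, τ₁} ≤ α₂ * ν.real {-τ₁, τ₁} := by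
      unfold tailMass at h
      linarith
    unfold tailMass
    rw [momentMeasure_real_pair hτ₁, mul_left_comm, mul_left_comm α₂]
    gcongr
  · exact tailMass_le_tailMass_of_lt hgt hτ₁ hα₁.2 hα₂.1

lemma tailMass_momentMeasure_eq_of_eq (hfin : momentP p ν ≠ ∞) (hτ₁ : 0 ≤ τ₁) (hτ₂ : 0 ≤ τ₂)
    (hα₁ : α₁ ∈ Icc (0 : ℝ) 1) (hα₂ : α₂ ∈ Icc (0 : ℝ) 1)
    (h : tailMass ν τ₁ α₁ = tailMass ν τ₂ α₂) :
    tailMass (momentMeasure p ν) τ₁ α₁ = tailMass (momentMeasure p ν) τ₂ α₂ :=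
  (tailMass_momentMeasure_le_of_le hfin hτ₁ hτ₂ hα₁ hα₂ h.le).antisymm
    (tailMass_momentMeasure_le_of_le hfin hτ₂ hτ₁ hα₂ hα₁ h.ge)

lemma momentMeasure_real_add_mul_pair_pos (hfin : momentP p ν ≠ ∞) {s : Set ℝ} (h0 : (0 : ℝ) ∉ s)
    (hτ : 0 < τ) {β : ℝ} (hβ : 0 ≤ β) (h : 0 < ν.real s + β * ν.real {-τ, τ}) :
    0 < (momentMeasure p ν).real s + β * (momentMeasure p ν).real {-τ, τ} := by
  rw [momentMeasure_real_pair hτ.le, mul_left_comm]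
  have hτp : 0 < τ ^ p := Real.rpow_pos_of_pos hτ p
  rcases (measureReal_nonneg (μ := ν) (s := s)).eq_or_lt with hs | hs
  · have hβ' : 0 < β * ν.real {-τ, τ} := by linarith
    exact add_pos_of_nonneg_of_pos measureReal_nonneg (mul_pos hτp hβ')
  · exact add_pos_of_pos_of_nonneg (momentMeasure_real_pos hfin h0 hs) (by positivity)

lemma tailMass_momentMeasure_pos_iff (hp : 0 < p) (hmom0 : momentP p ν ≠ 0)
    (hfin : momentP p ν ≠ ∞) (hτ : 0 ≤ τ) (hα : 0 ≤ α) :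
    0 < tailMass ν τ α ↔ 0 < tailMass (momentMeasure p ν) τ α := by
  constructor
  · intro h
    rcases hτ.eq_or_lt with rfl | hτ
    · rw [tailMass, momentMeasure_real_Ctau_zero hp hfin]
      exact add_pos_of_pos_of_nonneg (ENNReal.toReal_pos hmom0 hfin) (by positivity)
    · exact momentMeasure_real_add_mul_pair_pos hfin (zero_notMem_Ctau hτ.le) hτ hα h
  · intro h
    contrapose! h
    have hC : ν.real (Ctau τ) = 0 := by
      unfold tailMass at h
      linarith [mul_nonneg hα (measureReal_nonneg (μ := ν) (s := {-τ, τ})),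
        measureReal_nonneg (μ := ν) (s := Ctau τ)]
    have hP : α * ν.real {-τ, τ} = 0 := by
      unfold tailMass at h
      linarith [mul_nonneg hα (measureReal_nonneg (μ := ν) (s := {-τ, τ}))]
    rw [tailMass, momentMeasure_real_eq_zero hC, momentMeasure_real_pair hτ]
    linear_combination τ ^ p * hP

lemma tailMass_momentMeasure_le (hp : 0 ≤ p) (hfin : momentP p ν ≠ ∞)
    (hτ : 0 ≤ τ) (hα : α ∈ Icc (0 : ℝ) 1) {K : ℝ} (hK : 0 ≤ K) :
    tailMass (momentMeasure p ν) τ α ≤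
      K ^ p * tailMass ν τ α + (momentMeasure p ν).real (Btau K) := by
  have := isFiniteMeasure_momentMeasure hfin
  have hKp : 0 ≤ K ^ p := Real.rpow_nonneg hK p
  rcases lt_or_ge τ K with hτK | hKτ
  · have hshell := momentMeasure_real_le (ν := ν) hp hK
      ((measurableSet_Ctau τ).diff (measurableSet_Btau K))
      fun x hx => (not_le.1 fun h => hx.2 (mem_Btau.2 h)).le
    have hpair : α * (τ ^ p * ν.real {-τ, τ}) ≤ K ^ p * (α * ν.real {-τ, τ}) := by
      rw [mul_left_comm]
      exact mul_le_mul_of_nonneg_right (Real.rpow_le_rpow hτ hτK.le hp)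
        (mul_nonneg hα.1 measureReal_nonneg)
    have hν := tailMass_eq_add (μ := ν) hτK hK α 1
    rw [tailMass_eq_add hτK hK α 1, momentMeasure_real_pair hτ, tailMass_one hK]
    rw [tailMass_one hK] at hν
    nlinarith [mul_nonneg hKp (measureReal_nonneg (μ := ν) (s := Btau K))]
  · calc tailMass (momentMeasure p ν) τ α ≤ (momentMeasure p ν).real (Btau τ) :=
          tailMass_le_measureReal_Btau hτ hα.2
      _ ≤ (momentMeasure p ν).real (Btau K) := measureReal_mono (Btau_antitone hKτ)
      _ ≤ _ := le_add_of_nonneg_left (mul_nonneg hKp (tailMass_nonneg hα.1))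

lemma mem_Fgraph_iff (hfin : momentP p ν ≠ ∞) {r d : ℝ} :
    (r, d) ∈ Fgraph p ν ↔ ∃ τ, 0 ≤ τ ∧ ∃ α ∈ Icc (0 : ℝ) 1, r = tailMass ν τ α ∧
      d = (1 - tailMass (momentMeasure p ν) τ α / (momentP p ν).toReal) ^ (1 / p) := by
  have := isFiniteMeasure_momentMeasure hfin
  have hB : ∀ τ, 0 ≤ τ →
      vP p ν (Btau τ) = tailMass (momentMeasure p ν) τ 1 / (momentP p ν).toReal := fun τ hτ => by
    rw [vP_eq (measurableSet_Btau τ), tailMass_one hτ]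
  have hC : ∀ τ α, vP p ν (Ctau τ) + α * vP p ν {-τ, τ} =
      tailMass (momentMeasure p ν) τ α / (momentP p ν).toReal := fun τ α => by
    rw [vP_eq (measurableSet_Ctau τ), vP_eq ((measurableSet_singleton τ).insert (-τ)), tailMass]
    ring
  simp only [Fgraph, mem_union, mem_ofPred_eq, Prod.mk.injEq]
  constructor
  · rintro (⟨τ, hτ, rfl, rfl⟩ | ⟨τ, hτ, -, α, hα, rfl, rfl⟩)
    · exact ⟨τ, hτ, 1, right_mem_Icc.2 zero_le_one, (tailMass_one hτ).symm, by rw [hB τ hτ]⟩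
    · exact ⟨τ, hτ, α, Ico_subset_Icc_self hα, rfl, by rw [sub_sub, hC]⟩
  · rintro ⟨τ, hτ, α, hα, rfl, rfl⟩
    by_cases h : α = 1 ∨ ν.real {-τ, τ} = 0
    · have h₁ : ∀ μ : Measure ℝ, μ.real {-τ, τ} = 0 → tailMass μ τ α = tailMass μ τ 1 :=
        fun μ hμ => by simp [tailMass, hμ]
      have h₂ : tailMass ν τ α = tailMass ν τ 1 ∧
          tailMass (momentMeasure p ν) τ α = tailMass (momentMeasure p ν) τ 1 := by
        rcases h with rfl | h
        · exact ⟨rfl, rfl⟩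
        · exact ⟨h₁ ν h, h₁ _ (by rw [momentMeasure_real_pair hτ, h, mul_zero])⟩
      refine Or.inl ⟨τ, hτ, ?_, ?_⟩
      · rw [h₂.1, tailMass_one hτ]
        rfl
      · rw [h₂.2, hB τ hτ]
    · rw [not_or] at h
      exact Or.inr ⟨τ, hτ, measureReal_nonneg.lt_of_ne' h.2, α, ⟨hα.1, hα.2.lt_of_ne h.1⟩, rfl,
        by rw [sub_sub, hC]⟩

lemma fApprox_tailMass (hfin : momentP p ν ≠ ∞) (hτ : 0 ≤ τ) (hα : α ∈ Icc (0 : ℝ) 1) :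
    fApprox p ν (tailMass ν τ α) =
      (1 - tailMass (momentMeasure p ν) τ α / (momentP p ν).toReal) ^ (1 / p) := by
  rw [fApprox, if_neg hfin]
  refine (congrArg sSup (eq_singleton_iff_unique_mem.2 ⟨?_, ?_⟩)).trans (csSup_singleton _)
  · exact (mem_Fgraph_iff hfin).2 ⟨τ, hτ, α, hα, rfl, rfl⟩
  · rintro d hd
    obtain ⟨τ', hτ', α', hα', hr, rfl⟩ := (mem_Fgraph_iff hfin).1 hd
    rw [tailMass_momentMeasure_eq_of_eq hfin hτ hτ' hα hα' hr]

end FiniteMeasure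

section ProbabilityMeasure

variable [IsProbabilityMeasure ν] {r : ℝ}

lemma exists_tailMass_eq_of_mem_Ioc (hr : r ∈ Ioc (0 : ℝ) 1) :
    ∃ τ, 0 ≤ τ ∧ ∃ α ∈ Icc (0 : ℝ) 1, tailMass ν τ α = r :=
  exists_tailMass_eq hr.1 (by rw [probReal_univ]; exact hr.2)

lemma tailMass_momentMeasure_lt (hp : 0 < p) (hfin : momentP p ν ≠ ∞) (hτ : 0 ≤ τ)
    (hα : α ∈ Icc (0 : ℝ) 1) (h : tailMass ν τ α < 1 - ν.real {0}) :
    tailMass (momentMeasure p ν) τ α < (momentP p ν).toReal := by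
  have := isFiniteMeasure_momentMeasure hfin
  have hC₀ : ν.real (Ctau 0) = 1 - ν.real {0} := by
    rw [Ctau_zero, probReal_compl_eq_one_sub (measurableSet_singleton 0)]
  rcases hτ.eq_or_lt with rfl | hτ
  · rw [tailMass, hC₀] at h
    nlinarith [hα.1, measureReal_nonneg (μ := ν) (s := {-0, 0})]
  -- Compare with the parameter `(0, 0)`, whose tail masses are `1 - ν {0}` and the full moment.
  have hν := tailMass_eq_add (μ := ν) hτ hτ.le 0 α
  have hρ := tailMass_eq_add (μ := momentMeasure p ν) hτ hτ.le 0 α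
  simp only [tailMass, zero_mul, add_zero, zero_add] at hν hρ
  rw [hC₀] at hν
  rw [momentMeasure_real_Ctau_zero hp hfin] at hρ
  have hpos := momentMeasure_real_add_mul_pair_pos hfin (s := Ctau 0 \ Btau τ)
    (fun h0 => zero_notMem_Ctau le_rfl h0.1)
    hτ (sub_nonneg.2 hα.2) (by unfold tailMass at h; linarith)
  unfold tailMass
  linarith

lemma fApprox_eq_zero (hp : 0 < p) (hmom0 : momentP p ν ≠ 0) (hfin : momentP p ν ≠ ∞)
    (hr : r ∈ Icc (1 - ν.real {0}) 1) : fApprox p ν r = 0 := by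
  have hC₀ : ν.real {0}ᶜ = 1 - ν.real {0} := probReal_compl_eq_one_sub (measurableSet_singleton 0)
  obtain ⟨α, hα, rfl⟩ := exists_mem_Icc_add_mul_eq (hC₀ ▸ hr.1) (by rw [hC₀]; linarith [hr.2])
  rw [← tailMass_zero_left, fApprox_tailMass hfin le_rfl hα, tailMass,
    momentMeasure_real_Ctau_zero hp hfin, neg_zero, pair_eq_singleton, measureReal_def,
    momentMeasure_singleton_zero hp, ENNReal.toReal_zero, mul_zero, add_zero,
    div_self (ENNReal.toReal_pos hmom0 hfin).ne', sub_self, Real.zero_rpow (by positivity)]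

lemma fApprox_mem_Ico (hp : 0 < p) (hmom0 : momentP p ν ≠ 0) (hfin : momentP p ν ≠ ∞)
    (hr : r ∈ Ioc (0 : ℝ) 1) : fApprox p ν r ∈ Ico (0 : ℝ) 1 := by
  obtain ⟨τ, hτ, α, hα, rfl⟩ := exists_tailMass_eq_of_mem_Ioc (ν := ν) hr
  have hpos := (tailMass_momentMeasure_pos_iff hp hmom0 hfin hτ hα.1).1 hr.1
  have hle := tailMass_momentMeasure_le_moment hfin hτ hα.2
  have hm := ENNReal.toReal_pos hmom0 hfin
  rw [fApprox_tailMass hfin hτ hα]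
  exact ⟨Real.rpow_nonneg (sub_nonneg.2 ((div_le_one hm).2 hle)) _,
    Real.rpow_lt_one (sub_nonneg.2 ((div_le_one hm).2 hle)) (sub_lt_self _ (div_pos hpos hm))
      (by positivity)⟩

lemma fApprox_pos (hp : 0 < p) (hfin : momentP p ν ≠ ∞) (hr : r ∈ Ioo 0 (1 - ν.real {0})) :
    0 < fApprox p ν r := by
  obtain ⟨τ, hτ, α, hα, rfl⟩ :=
    exists_tailMass_eq_of_mem_Ioc (ν := ν) ⟨hr.1, hr.2.le.trans (sub_le_self _ measureReal_nonneg)⟩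
  have hlt := tailMass_momentMeasure_lt hp hfin hτ hα hr.2
  have hm : 0 < (momentP p ν).toReal := (tailMass_nonneg (μ := momentMeasure p ν) hα.1).trans_lt hlt
  rw [fApprox_tailMass hfin hτ hα]
  exact Real.rpow_pos_of_pos (sub_pos.2 ((div_lt_one hm).2 hlt)) _

lemma image_fApprox_Ioc (hp : 0 < p) (hmom0 : momentP p ν ≠ 0) (hfin : momentP p ν ≠ ∞) :
    fApprox p ν '' Ioc 0 1 = Ico (0 : ℝ) 1 := by
  refine Subset.antisymm (image_subset_iff.2 fun r hr => fApprox_mem_Ico hp hmom0 hfin hr)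
    fun d hd => ?_
  have := isFiniteMeasure_momentMeasure hfin
  have hm := ENNReal.toReal_pos hmom0 hfin
  have hd₁ : d ^ p < 1 := Real.rpow_lt_one hd.1 hd.2 hp
  have hd₀ : 0 ≤ d ^ p := Real.rpow_nonneg hd.1 p
  -- Realize the moment fraction `1 - d ^ p` as a tail mass of `|x|^p dν`.
  obtain ⟨τ, hτ, α, hα, hρ⟩ := exists_tailMass_eq (μ := momentMeasure p ν)
    (c := (1 - d ^ p) * (momentP p ν).toReal) (by nlinarith)
    (by rw [momentMeasure_real_univ]; nlinarith)
  refine ⟨tailMass ν τ α, ⟨?_, ?_⟩, ?_⟩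
  · exact (tailMass_momentMeasure_pos_iff hp hmom0 hfin hτ hα.1).2 (hρ ▸ by nlinarith)
  · exact (tailMass_le_measureReal_univ hτ hα.2).trans_eq probReal_univ
  · rw [fApprox_tailMass hfin hτ hα, hρ, mul_div_cancel_right₀ _ hm.ne', sub_sub_cancel,
      ← Real.rpow_mul hd.1, mul_one_div_cancel hp.ne', Real.rpow_one]

lemma setOf_fApprox_mem_Ioo (hp : 0 < p) (hmom0 : momentP p ν ≠ 0) (hfin : momentP p ν ≠ ∞) :
    {r ∈ Ioc (0 : ℝ) 1 | fApprox p ν r ∈ Ioo (0 : ℝ) 1} = Ioo 0 (1 - ν.real {0}) := by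
  ext r
  constructor
  · rintro ⟨hr, hf, -⟩
    exact ⟨hr.1, lt_of_not_ge fun h => hf.ne' (fApprox_eq_zero hp hmom0 hfin ⟨h, hr.2⟩)⟩
  · intro hr
    have hr₁ : r ≤ 1 := hr.2.le.trans (sub_le_self _ measureReal_nonneg)
    exact ⟨⟨hr.1, hr₁⟩, fApprox_pos hp hfin hr, (fApprox_mem_Ico hp hmom0 hfin ⟨hr.1, hr₁⟩).2⟩

lemma one_sub_le_fApprox_rpow (hp : 0 < p) (hmom0 : momentP p ν ≠ 0) (hfin : momentP p ν ≠ ∞)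
    (hr : r ∈ Ioc (0 : ℝ) 1) {K : ℝ} (hK : 0 ≤ K) :
    1 - (K ^ p * r + (momentMeasure p ν).real (Btau K)) / (momentP p ν).toReal ≤
      fApprox p ν r ^ p := by
  obtain ⟨τ, hτ, α, hα, rfl⟩ := exists_tailMass_eq_of_mem_Ioc (ν := ν) hr
  have hm := ENNReal.toReal_pos hmom0 hfin
  have hle := tailMass_momentMeasure_le_moment hfin hτ hα.2
  rw [fApprox_tailMass hfin hτ hα, ← Real.rpow_mul (sub_nonneg.2 ((div_le_one hm).2 hle)),
    one_div_mul_cancel hp.ne', Real.rpow_one]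
  gcongr
  exact tailMass_momentMeasure_le hp.le hfin hτ hα hK

lemma tendsto_fApprox_nhdsGT_zero (hp : 0 < p) (hmom0 : momentP p ν ≠ 0)
    (hfin : momentP p ν ≠ ∞) : Tendsto (fApprox p ν) (𝓝[>] 0) (𝓝 1) := by
  have := isFiniteMeasure_momentMeasure hfin
  have hIoc : ∀ᶠ r in 𝓝[>] (0 : ℝ), r ∈ Ioc (0 : ℝ) 1 := Ioc_mem_nhdsGT one_pos
  have hpow : Tendsto (fun r => fApprox p ν r ^ p) (𝓝[>] 0) (𝓝 1) := by
    refine tendsto_order.2 ⟨fun a ha => ?_, fun b hb => hIoc.mono fun r hr => ?_⟩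
    · set m := (momentP p ν).toReal
      have hB := (tendsto_measureReal_Btau_atTop (μ := momentMeasure p ν)).div_const m
      obtain ⟨K, hKa, hK⟩ := ((hB.eventually (gt_mem_nhds (by rwa [zero_div, sub_pos]))).and
        (eventually_ge_atTop 0)).exists
      have hlim : Tendsto (fun r => 1 - (K ^ p * r + (momentMeasure p ν).real (Btau K)) / m)
          (𝓝[>] 0) (𝓝 (1 - (K ^ p * 0 + (momentMeasure p ν).real (Btau K)) / m)) :=
        ((Continuous.tendsto (by fun_prop) 0).mono_left nhdsWithin_le_nhds)
      have ha' : a < 1 - (K ^ p * 0 + (momentMeasure p ν).real (Btau K)) / m := by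
        rw [mul_zero, zero_add]
        linarith
      filter_upwards [hlim.eventually (lt_mem_nhds ha'), hIoc] with r h hr
      exact h.trans_le (one_sub_le_fApprox_rpow hp hmom0 hfin hr hK)
    · have hf := fApprox_mem_Ico hp hmom0 hfin hr
      exact (Real.rpow_le_one hf.1 hf.2.le hp.le).trans_lt hb
  have h := hpow.rpow_const (p := p⁻¹) (Or.inl one_ne_zero)
  rw [Real.one_rpow] at h
  exact h.congr' (hIoc.mono fun r hr =>
    Real.rpow_rpow_inv (fApprox_mem_Ico hp hmom0 hfin hr).1 hp.ne')

end ProbabilityMeasure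

end

/-- Lemma 8 (iii)-(v): boundary behaviour and range of the approximation error function. -/
theorem fApprox_boundary_range
    (p : ℝ) (hp : 0 < p) (ν : Measure ℝ) [IsProbabilityMeasure ν]
    (hmom0 : 0 < momentP p ν) (hmomfin : momentP p ν < ∞) :
    (∀ r ∈ Set.Icc (1 - (ν ({0} : Set ℝ)).toReal) 1, fApprox p ν r = 0) ∧
    Tendsto (fApprox p ν) (nhdsWithin 0 (Set.Ioi 0)) (𝓝 1) ∧
    fApprox p ν '' Set.Ioc (0:ℝ) 1 = Set.Ico (0:ℝ) 1 ∧
    {r ∈ Set.Ioc (0:ℝ) 1 | fApprox p ν r ∈ Set.Ioo (0:ℝ) 1} =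
      Set.Ioo (0:ℝ) (1 - (ν ({0} : Set ℝ)).toReal) :=
  ⟨fun _ hr => fApprox_eq_zero hp hmom0.ne' hmomfin.ne hr,
    tendsto_fApprox_nhdsGT_zero hp hmom0.ne' hmomfin.ne,
    image_fApprox_Ioc hp hmom0.ne' hmomfin.ne,
    setOf_fApprox_mem_Ioo hp hmom0.ne' hmomfin.ne⟩
end
end

section
/- Let X = (X_n)_{n≥1} be a process with distribution μ on ℝ^ℕ that has a strong ℓp-characterization with constant limiting function f_{p,μ}. Then: (i) if 0 < r₁ < r₂ ≤ 1 then f_{p,μ}(r₂) ≤ f_{p,μ}(r₁); (ii) if 0 < r₁ < r₂ ≤ 1 and f_{p,μ}(r₂) = f_{p,μ}(r₁), then f_{p,μ}(r₂) = f_{p,μ}(r₁) = 0. -/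
/-!
Write `m_k(x)` for the smallest sum of `|x_i|^p` over `n - k` coordinates of `x ∈ ℝ^n`, so that
`σ̃_p(k, x)^p = m_k(x) / ‖x‖_p^p`. Adding to an optimal `k`-set the best of its `n - k` outsiders
removes at least the average outside mass, so `m_{k+1} ≤ (n-k-1)/(n-k) · m_k`; iterating,
`(n - k₁) m_{k₂} ≤ (n - k₂) m_{k₁}` for `k₁ ≤ k₂ ≤ n`. Along `k_i = ⌊r_i n⌋` and a sample path
on which both limits hold, this becomes `(1 - r₁) f(r₂)^p ≤ (1 - r₂) f(r₁)^p`; as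
`1 - r₂ < 1 - r₁`, it forces `f(r₂) ≤ f(r₁)`, with equality only when `f(r₁) = 0`.
-/

open MeasureTheory Filter Set
open scoped ENNReal Topology Classical

noncomputable section

section MinTailSum

variable {ι : Type*} [Fintype ι] [DecidableEq ι] (w : ι → ℝ)

def minTailSum (k : ℕ) : ℝ :=
  sInf ((fun S : Finset ι => ∑ i ∈ Sᶜ, w i) '' {S | S.card = k})

variable {w}

lemma minTailSum_le {k : ℕ} {S : Finset ι} (hS : S.card = k) :
    minTailSum w k ≤ ∑ i ∈ Sᶜ, w i :=
  csInf_le ((Set.toFinite _).image _).bddBelow ⟨S, hS, rfl⟩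

lemma exists_minTailSum_eq {k : ℕ} (hk : k ≤ Fintype.card ι) :
    ∃ S : Finset ι, S.card = k ∧ ∑ i ∈ Sᶜ, w i = minTailSum w k := by
  obtain ⟨S, -, hS⟩ := Finset.exists_subset_card_eq (s := Finset.univ) (n := k) (by simpa)
  exact ((Set.image_nonempty.2 ⟨S, hS⟩).csInf_mem ((Set.toFinite _).image _))

lemma minTailSum_nonneg (hw : 0 ≤ w) {k : ℕ} (hk : k ≤ Fintype.card ι) :
    0 ≤ minTailSum w k := by
  obtain ⟨S, -, hS⟩ := exists_minTailSum_eq (w := w) hk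
  exact hS ▸ Finset.sum_nonneg fun i _ => hw i

lemma card_sub_mul_minTailSum_succ_le {k : ℕ} (hk : k < Fintype.card ι) :
    ((Fintype.card ι : ℝ) - k) * minTailSum w (k + 1) ≤
      ((Fintype.card ι : ℝ) - (k + 1)) * minTailSum w k := by
  obtain ⟨S, hS, hmin⟩ := exists_minTailSum_eq (w := w) hk.le
  have hcard : (Sᶜ.card : ℝ) = Fintype.card ι - k := by
    rw [Finset.card_compl, hS, Nat.cast_sub hk.le]
  have hinsert : ∀ j ∈ Sᶜ, minTailSum w (k + 1) ≤ minTailSum w k - w j := by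
    intro j hj
    have h := minTailSum_le (w := w) (Finset.card_insert_of_notMem (Finset.mem_compl.1 hj) ▸
      congrArg (· + 1) hS)
    rwa [Finset.compl_insert, Finset.sum_erase_eq_sub hj, hmin] at h
  have hsum := Finset.sum_le_sum hinsert
  rw [Finset.sum_const, Finset.sum_sub_distrib, Finset.sum_const, hmin, nsmul_eq_mul,
    nsmul_eq_mul, hcard] at hsum
  linarith

lemma card_sub_mul_minTailSum_le {k₁ k₂ : ℕ} (h12 : k₁ ≤ k₂) (h2 : k₂ ≤ Fintype.card ι) :
    ((Fintype.card ι : ℝ) - k₁) * minTailSum w k₂ ≤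
      ((Fintype.card ι : ℝ) - k₂) * minTailSum w k₁ := by
  set N : ℝ := (Fintype.card ι : ℝ) with hN
  induction k₂, h12 using Nat.le_induction with
  | base => exact le_rfl
  | succ k hk ih =>
    have hkN : k < Fintype.card ι := h2
    have hpos : 0 < N - k := sub_pos.2 (by rw [hN]; exact_mod_cast hkN)
    have h1 : 0 ≤ N - k₁ := sub_nonneg.2 (by rw [hN]; exact_mod_cast hk.trans hkN.le)
    have h2' : 0 ≤ N - (k + 1) := sub_nonneg.2 (by rw [hN]; exact_mod_cast h2)
    refine le_of_mul_le_mul_left ?_ hpos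
    push_cast
    calc (N - k) * ((N - k₁) * minTailSum w (k + 1))
        = (N - k₁) * ((N - k) * minTailSum w (k + 1)) := by ring
      _ ≤ (N - k₁) * ((N - (k + 1)) * minTailSum w k) :=
        mul_le_mul_of_nonneg_left (card_sub_mul_minTailSum_succ_le hkN) h1
      _ = (N - (k + 1)) * ((N - k₁) * minTailSum w k) := by ring
      _ ≤ (N - (k + 1)) * ((N - k) * minTailSum w k₁) :=
        mul_le_mul_of_nonneg_left (ih hkN.le) h2'
      _ = (N - k) * ((N - (k + 1)) * minTailSum w k₁) := by ring

end MinTailSum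

section SigmaTilde

variable {p : ℝ} {n k : ℕ}

lemma sigmaP_eq_minTailSum_rpow (hp : 0 < p) (hk : k ≤ n) (x : Fin n → ℝ) :
    sigmaP p n k x = minTailSum (fun i => |x i| ^ p) k ^ (1 / p) := by
  have hk' : k ≤ Fintype.card (Fin n) := by simpa using hk
  obtain ⟨S₀, hS₀, hmin⟩ := exists_minTailSum_eq (w := fun i => |x i| ^ p) hk'
  refine le_antisymm (csInf_le ⟨0, ?_⟩ ⟨S₀, hS₀, by rw [hmin]⟩) ?_
  · rintro e ⟨S, -, rfl⟩
    positivity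
  · refine le_csInf ⟨_, S₀, hS₀, rfl⟩ ?_
    rintro e ⟨S, hS, rfl⟩
    exact Real.rpow_le_rpow
      (minTailSum_nonneg (w := fun i => |x i| ^ p) (fun i => by positivity) hk')
      (minTailSum_le hS) (by positivity)

lemma sigmaTilde_rpow (hp : 0 < p) (hk : k ≤ n) (x : Fin n → ℝ) :
    sigmaTilde p n k x ^ p = minTailSum (fun i => |x i| ^ p) k / ∑ i, |x i| ^ p := by
  have hT : 0 ≤ ∑ i, |x i| ^ p := by positivity
  have hm := minTailSum_nonneg (w := fun i => |x i| ^ p) (fun i => by positivity)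
    (by simpa using hk : k ≤ Fintype.card (Fin n))
  rw [sigmaTilde, sigmaP_eq_minTailSum_rpow hp hk, ← Real.div_rpow hm hT,
    ← Real.rpow_mul (div_nonneg hm hT), one_div_mul_cancel hp.ne', Real.rpow_one]

lemma sub_mul_sigmaTilde_rpow_le (hp : 0 < p) {k₁ k₂ : ℕ} (h12 : k₁ ≤ k₂) (h2 : k₂ ≤ n)
    (x : Fin n → ℝ) :
    ((n : ℝ) - k₁) * sigmaTilde p n k₂ x ^ p ≤ ((n : ℝ) - k₂) * sigmaTilde p n k₁ x ^ p := by
  rw [sigmaTilde_rpow hp h2, sigmaTilde_rpow hp (h12.trans h2), ← mul_div_assoc, ← mul_div_assoc]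
  have h := card_sub_mul_minTailSum_le (w := fun i => |x i| ^ p) h12 (by simpa using h2)
  rw [Fintype.card_fin] at h
  exact div_le_div_of_nonneg_right h (by positivity)

end SigmaTilde

namespace StrongLpChar

lemma one_sub_mul_rpow_le {p : ℝ} (hp : 0 < p) {μ : Measure (ℕ → ℝ)} [NeZero μ]
    {f : ℝ → ℝ} (hchar : StrongLpChar p μ f) {r₁ r₂ : ℝ} (h1 : 0 < r₁) (h12 : r₁ ≤ r₂)
    (h2 : r₂ ≤ 1) : (1 - r₁) * f r₂ ^ p ≤ (1 - r₂) * f r₁ ^ p := by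
  set k₁ : ℕ → ℕ := fun n => ⌊r₁ * n⌋₊
  set k₂ : ℕ → ℕ := fun n => ⌊r₂ * n⌋₊
  have ht₁ : Tendsto (fun n : ℕ => (k₁ n : ℝ) / n) atTop (𝓝 r₁) :=
    (tendsto_nat_floor_mul_div_atTop h1.le).comp tendsto_natCast_atTop_atTop
  have ht₂ : Tendsto (fun n : ℕ => (k₂ n : ℝ) / n) atTop (𝓝 r₂) :=
    (tendsto_nat_floor_mul_div_atTop (h1.le.trans h12)).comp tendsto_natCast_atTop_atTop
  have hae₁ := hchar.2 r₁ ⟨h1, h12.trans h2⟩ k₁ ht₁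
  have hae₂ := hchar.2 r₂ ⟨h1.trans_le h12, h2⟩ k₂ ht₂
  have : (ae μ).NeBot := ae_neBot.2 (NeZero.ne μ)
  obtain ⟨x, hx₁, hx₂⟩ := (hae₁.and hae₂).exists
  have hk12 (n : ℕ) : k₁ n ≤ k₂ n := Nat.floor_mono (by gcongr)
  have hk2 (n : ℕ) : k₂ n ≤ n := Nat.floor_le_of_le (mul_le_of_le_one_left n.cast_nonneg h2)
  refine le_of_tendsto_of_tendsto ((tendsto_const_nhds.sub ht₁).mul (hx₂.rpow_const (.inr hp.le)))
    ((tendsto_const_nhds.sub ht₂).mul (hx₁.rpow_const (.inr hp.le))) ?_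
  filter_upwards [eventually_gt_atTop 0] with n hn
  have hn' : (0 : ℝ) < n := by exact_mod_cast hn
  rw [one_sub_div hn'.ne', one_sub_div hn'.ne', div_mul_eq_mul_div, div_mul_eq_mul_div]
  exact div_le_div_of_nonneg_right (sub_mul_sigmaTilde_rpow_le hp (hk12 n) (hk2 n) _) hn'.le

end StrongLpChar

/-- Proposition 3: monotonicity of the constant limiting function of a strong
`ℓp`-characterization. -/
theorem strong_char_limit_monotone
    (p : ℝ) (hp : 0 < p) (μ : Measure (ℕ → ℝ)) [IsProbabilityMeasure μ]
    (f : ℝ → ℝ) (hchar : StrongLpChar p μ f) :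
    (∀ r₁ r₂ : ℝ, 0 < r₁ → r₁ < r₂ → r₂ ≤ 1 → f r₂ ≤ f r₁) ∧
    (∀ r₁ r₂ : ℝ, 0 < r₁ → r₁ < r₂ → r₂ ≤ 1 → f r₂ = f r₁ → f r₂ = 0 ∧ f r₁ = 0) := by
  have hnonneg (r : ℝ) (h1 : 0 < r) (h2 : r ≤ 1) : 0 ≤ f r := (hchar.1 r ⟨h1, h2⟩).1
  have hgap (r₁ r₂ : ℝ) (h1 : 0 < r₁) (h12 : r₁ < r₂) (h2 : r₂ ≤ 1) :
      (r₂ - r₁) * f r₁ ^ p ≤ (1 - r₁) * (f r₁ ^ p - f r₂ ^ p) := by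
    linarith [hchar.one_sub_mul_rpow_le hp h1 h12.le h2]
  refine ⟨fun r₁ r₂ h1 h12 h2 => ?_, fun r₁ r₂ h1 h12 h2 heq => ?_⟩
  · have hf₁ := hnonneg r₁ h1 (h12.le.trans h2)
    have hrpow : f r₂ ^ p ≤ f r₁ ^ p := sub_nonneg.1 <| nonneg_of_mul_nonneg_right
      ((mul_nonneg (sub_pos.2 h12).le (Real.rpow_nonneg hf₁ p)).trans (hgap r₁ r₂ h1 h12 h2))
      (sub_pos.2 (h12.trans_le h2))
    exact (Real.rpow_le_rpow_iff (hnonneg r₂ (h1.trans h12) h2) hf₁ hp).1 hrpow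
  · have hf₁ := hnonneg r₁ h1 (h12.le.trans h2)
    have h := hgap r₁ r₂ h1 h12 h2
    rw [heq, sub_self, mul_zero] at h
    have hz : f r₁ ^ p = 0 :=
      le_antisymm (nonpos_of_mul_nonpos_right h (sub_pos.2 h12)) (Real.rpow_nonneg hf₁ p)
    have hz' := (Real.rpow_eq_zero hf₁ hp.ne').1 hz
    exact ⟨heq.trans hz', hz'⟩
end
end

section
/- Let μ be an AMS and ergodic probability measure on ℝ^ℕ with stationary mean μ̄ and one-dimensional marginal μ̄₁, and let p > 0 with 0 < ∫_ℝ |x|^p dμ̄₁(x) < ∞. Then for every τ ≥ 0: (i) (1/n) · #{i ∈ {1,…,n} : X_i ∈ B_τ} → μ̄₁(B_τ) μ-almost surely; and (ii) (∑_{i=1}^n 1_{B_τ}(X_i)·|X_i|^p)/(∑_{i=1}^n |X_i|^p) → v_p(B_τ) μ-almost surely. -/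
open MeasureTheory Filter Set
open scoped ENNReal Topology Classical

noncomputable section

/-!
Under the AMS hypothesis, `μ` and its stationary mean `ν` agree on shift-invariant sets. Hence `ν`
is shift-invariant and ergodic, so Birkhoff's ergodic theorem holds under `ν`; since the set where
the Birkhoff averages converge to a given limit is shift-invariant, the convergence transfers from
`ν` to `μ`. Both claims are instances of this for `f x = F (x 0)` with `F = 1_{B_τ}`,
`1_{B_τ} |·|^p` and `|·|^p`, the second one as a quotient of two such averages.

The ergodic theorem itself goes through Garsia's maximal inequality: if `∫ g < 0`, the set where
the partial sums of `g` are unbounded above is invariant, and it cannot have full measure, since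
then the maximal inequality would give `∫ g ≥ 0`.
-/

section BirkhoffSum

variable {α : Type*} {T : α → α} {g : α → ℝ}

def maxBirkhoffSum (T : α → α) (g : α → ℝ) (N : ℕ) : α → ℝ :=
  (Finset.range (N + 1)).sup' Finset.nonempty_range_add_one (birkhoffSum T g)

lemma birkhoffSum_le_maxBirkhoffSum {k N : ℕ} (hk : k ≤ N) (x : α) :
    birkhoffSum T g k x ≤ maxBirkhoffSum T g N x := by
  rw [maxBirkhoffSum, Finset.sup'_apply]
  exact Finset.le_sup' (birkhoffSum T g · x) (Finset.mem_range.2 (by omega))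

lemma maxBirkhoffSum_nonneg (N : ℕ) (x : α) : 0 ≤ maxBirkhoffSum T g N x :=
  birkhoffSum_zero T g x ▸ birkhoffSum_le_maxBirkhoffSum (Nat.zero_le N) x

lemma monotone_maxBirkhoffSum : Monotone (maxBirkhoffSum T g) := fun _ _ h =>
  Finset.sup'_mono _ (Finset.range_subset_range.2 (by omega)) _

lemma maxBirkhoffSum_le_add_maxBirkhoffSum_apply {N : ℕ} {x : α}
    (hpos : 0 < maxBirkhoffSum T g N x) :
    maxBirkhoffSum T g N x ≤ g x + maxBirkhoffSum T g N (T x) := by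
  obtain ⟨k, hk, hkM⟩ := (Finset.range (N + 1)).exists_mem_eq_sup'
    Finset.nonempty_range_add_one (birkhoffSum T g · x)
  rw [maxBirkhoffSum, Finset.sup'_apply] at hpos ⊢
  rw [hkM] at hpos ⊢
  obtain _ | k := k
  · simp at hpos
  · rw [birkhoffSum_succ']
    exact add_le_add_right (birkhoffSum_le_maxBirkhoffSum
      (by rw [Finset.mem_range] at hk; omega) (T x)) _

lemma bddAbove_range_birkhoffSum_apply_iff {x : α} :
    BddAbove (range fun n => birkhoffSum T g n (T x)) ↔
      BddAbove (range fun n => birkhoffSum T g n x) := by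
  constructor
  · rintro ⟨C, hC⟩
    refine ⟨max 0 (g x + C), forall_mem_range.2 fun n => ?_⟩
    obtain _ | n := n
    · exact (birkhoffSum_zero T g x).trans_le (le_max_left _ _)
    · rw [birkhoffSum_succ']
      exact le_max_of_le_right (by gcongr; exact hC (mem_range_self n))
  · rintro ⟨C, hC⟩
    refine ⟨C - g x, forall_mem_range.2 fun n => ?_⟩
    have := hC (mem_range_self (n + 1))
    rw [birkhoffSum_succ'] at this
    linarith

lemma tendsto_birkhoffAverage_apply_iff {x : α} {L : ℝ} :
    Tendsto (birkhoffAverage ℝ T g · (T x)) atTop (𝓝 L) ↔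
      Tendsto (birkhoffAverage ℝ T g · x) atTop (𝓝 L) := by
  have hrec (n : ℕ) : birkhoffAverage ℝ T g (n + 1) x =
      n / (n + 1) * birkhoffAverage ℝ T g n (T x) + g x / (n + 1) := by
    simp only [birkhoffAverage, birkhoffSum_succ', smul_eq_mul]
    rcases n.eq_zero_or_pos with rfl | hn
    · simp
    · push_cast
      field_simp
      ring
  have hratio : Tendsto (fun n : ℕ => (n : ℝ) / (n + 1)) atTop (𝓝 1) :=
    tendsto_natCast_div_add_atTop 1
  have hzero : Tendsto (fun n : ℕ => g x / ((n : ℝ) + 1)) atTop (𝓝 0) :=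
    tendsto_const_nhds.div_atTop (tendsto_natCast_atTop_atTop.atTop_add tendsto_const_nhds)
  rw [← tendsto_add_atTop_iff_nat 1 (f := (birkhoffAverage ℝ T g · x)), funext hrec]
  constructor
  · intro h
    simpa using (hratio.mul h).add hzero
  · intro h
    have := (h.sub hzero).div hratio one_ne_zero
    rw [sub_zero, div_one] at this
    refine this.congr' ?_
    filter_upwards [eventually_gt_atTop 0] with n hn
    simp only [Pi.div_apply, add_sub_cancel_right]
    field_simp

variable [MeasurableSpace α]

lemma Measurable.birkhoffSum (hT : Measurable T) (hg : Measurable g) (n : ℕ) :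
    Measurable (birkhoffSum T g n) :=
  Finset.measurable_sum _ fun i _ => hg.comp (hT.iterate i)

lemma Measurable.birkhoffAverage (hT : Measurable T) (hg : Measurable g) (n : ℕ) :
    Measurable (birkhoffAverage ℝ T g n) :=
  (hT.birkhoffSum hg n).const_smul ((n : ℝ)⁻¹)

lemma measurable_maxBirkhoffSum (hT : Measurable T) (hg : Measurable g) (N : ℕ) :
    Measurable (maxBirkhoffSum T g N) :=
  Finset.measurable_sup' _ fun n _ => hT.birkhoffSum hg n

lemma integrable_maxBirkhoffSum {ν : Measure α} (hT : MeasurePreserving T ν ν)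
    (hg : Integrable g ν) (N : ℕ) : Integrable (maxBirkhoffSum T g N) ν :=
  Finset.sup'_induction (p := (Integrable · ν)) _ _ (fun _ h₁ _ h₂ => h₁.sup h₂) fun _ _ =>
    integrable_finsetSum _ fun i _ => (hT.iterate i).integrable_comp_of_integrable hg

end BirkhoffSum

section Birkhoff

variable {α : Type*} [MeasurableSpace α] {ν : Measure α} {T : α → α} {g : α → ℝ}

theorem MeasureTheory.MeasurePreserving.maximal_ergodic_inequality (hT : MeasurePreserving T ν ν)
    (hgm : Measurable g) (hg : Integrable g ν) (N : ℕ) :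
    0 ≤ ∫ x in {x | 0 < maxBirkhoffSum T g N x}, g x ∂ν := by
  set M := maxBirkhoffSum T g N
  set E := {x | 0 < M x}
  have hE : MeasurableSet E :=
    measurableSet_lt measurable_const (measurable_maxBirkhoffSum hT.measurable hgm N)
  have hM : Integrable M ν := integrable_maxBirkhoffSum hT hg N
  have hMT : Integrable (M ∘ T) ν := hT.integrable_comp_of_integrable hM
  have hM_E : ∫ x in E, M x ∂ν = ∫ x, M x ∂ν :=
    setIntegral_eq_integral_of_forall_compl_eq_zero fun x hx =>
      le_antisymm (not_lt.1 hx) (maxBirkhoffSum_nonneg N x)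
  have hMT_E : ∫ x in E, M (T x) ∂ν ≤ ∫ x, M (T x) ∂ν :=
    setIntegral_le_integral hMT (.of_forall fun x => maxBirkhoffSum_nonneg N (T x))
  have hMT_eq : ∫ x, M (T x) ∂ν = ∫ x, M x ∂ν := by
    rw [← integral_map hT.aemeasurable (by rw [hT.map_eq]; exact hM.aestronglyMeasurable),
      hT.map_eq]
  calc 0 ≤ ∫ x in E, M x ∂ν - ∫ x in E, M (T x) ∂ν := by linarith
    _ = ∫ x in E, (M x - M (T x)) ∂ν := (integral_sub hM.integrableOn hMT.integrableOn).symm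
    _ ≤ ∫ x in E, g x ∂ν := setIntegral_mono_on (hM.sub hMT).integrableOn hg.integrableOn hE
        fun x hx => by linarith [maxBirkhoffSum_le_add_maxBirkhoffSum_apply (T := T) hx]

theorem MeasureTheory.MeasurePreserving.integral_nonneg_of_ae_exists_birkhoffSum_pos
    (hT : MeasurePreserving T ν ν) (hgm : Measurable g) (hg : Integrable g ν)
    (h : ∀ᵐ x ∂ν, ∃ n, 0 < birkhoffSum T g n x) : 0 ≤ ∫ x, g x ∂ν := by
  set U : ℕ → Set α := fun N => {x | 0 < maxBirkhoffSum T g N x}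
  have hU_cover : ∀ᵐ x ∂ν, x ∈ ⋃ N, U N := h.mono fun x ⟨n, hn⟩ =>
    mem_iUnion.2 ⟨n, hn.trans_le (birkhoffSum_le_maxBirkhoffSum le_rfl x)⟩
  have hU_univ : ν.restrict (⋃ N, U N) = ν := by
    rw [Measure.restrict_congr_set (ae_eq_univ.2 (ae_iff.1 hU_cover)), Measure.restrict_univ]
  have hlim : Tendsto (fun N => ∫ x in U N, g x ∂ν) atTop (𝓝 (∫ x in ⋃ N, U N, g x ∂ν)) :=
    tendsto_setIntegral_of_monotone
      (fun N => measurableSet_lt measurable_const (measurable_maxBirkhoffSum hT.measurable hgm N))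
      (fun _ _ h x hx => hx.trans_le (monotone_maxBirkhoffSum h x))
      (by rw [IntegrableOn, hU_univ]; exact hg)
  rw [hU_univ] at hlim
  exact ge_of_tendsto' hlim fun N => hT.maximal_ergodic_inequality hgm hg N

theorem Ergodic.ae_bddAbove_birkhoffSum (hT : Ergodic T ν) (hgm : Measurable g)
    (hg : Integrable g ν) (hneg : ∫ x, g x ∂ν < 0) :
    ∀ᵐ x ∂ν, BddAbove (range fun n => birkhoffSum T g n x) := by
  have hE := measurableSet_bddAbove_range (hT.measurable.birkhoffSum hgm)
  refine (hT.ae_mem_or_ae_notMem hE (Set.ext fun x => bddAbove_range_birkhoffSum_apply_iff)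
    ).resolve_right fun hunbdd => hneg.not_ge ?_
  refine hT.toMeasurePreserving.integral_nonneg_of_ae_exists_birkhoffSum_pos hgm hg
    (hunbdd.mono fun x hx => ?_)
  obtain ⟨_, ⟨n, rfl⟩, hn⟩ := not_bddAbove_iff.1 hx 0
  exact ⟨n, hn⟩

variable [IsProbabilityMeasure ν]

theorem Ergodic.ae_eventually_birkhoffAverage_lt (hT : Ergodic T ν) (hgm : Measurable g)
    (hg : Integrable g ν) {q : ℝ} (hq : ∫ x, g x ∂ν < q) :
    ∀ᵐ x ∂ν, ∀ᶠ n in atTop, birkhoffAverage ℝ T g n x < q := by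
  obtain ⟨c, hIc, hcq⟩ := exists_between hq
  have hc : ∫ x, (g x - c) ∂ν < 0 := by
    rw [integral_sub hg (integrable_const c)]
    simp only [integral_const, probReal_univ, one_smul]
    linarith
  filter_upwards [hT.ae_bddAbove_birkhoffSum (hgm.sub_const c) (hg.sub (integrable_const c)) hc]
    with x ⟨C, hC⟩
  have hsum (n : ℕ) : birkhoffSum T g n x ≤ n * c + C := by
    have := hC (mem_range_self n)
    simp only [birkhoffSum, Finset.sum_sub_distrib, Finset.sum_const, Finset.card_range,
      nsmul_eq_mul] at this ⊢
    linarith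
  have hlim : Tendsto (fun n : ℕ => c + C / n) atTop (𝓝 c) := by
    simpa using tendsto_const_nhds.add (tendsto_const_div_atTop_nhds_zero_nat C)
  filter_upwards [hlim.eventually (gt_mem_nhds hcq),
    eventually_gt_atTop 0] with n hn hn0
  calc birkhoffAverage ℝ T g n x = birkhoffSum T g n x / n := by
        rw [birkhoffAverage, smul_eq_mul, inv_mul_eq_div]
    _ ≤ (n * c + C) / n := by gcongr; exact hsum n
    _ = c + C / n := by field_simp
    _ < q := hn

theorem Ergodic.ae_tendsto_birkhoffAverage (hT : Ergodic T ν) (hgm : Measurable g)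
    (hg : Integrable g ν) :
    ∀ᵐ x ∂ν, Tendsto (birkhoffAverage ℝ T g · x) atTop (𝓝 (∫ x, g x ∂ν)) := by
  have hupper : ∀ᵐ x ∂ν, ∀ q : ℚ, ∫ x, g x ∂ν < q →
      ∀ᶠ n in atTop, birkhoffAverage ℝ T g n x < q :=
    ae_all_iff.2 fun q => eventually_imp_distrib_left.2 fun hq =>
      hT.ae_eventually_birkhoffAverage_lt hgm hg hq
  have hlower : ∀ᵐ x ∂ν, ∀ q : ℚ, q < ∫ x, g x ∂ν →
      ∀ᶠ n in atTop, q < birkhoffAverage ℝ T g n x :=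
    ae_all_iff.2 fun q => eventually_imp_distrib_left.2 fun hq => by
      have hneg : ∫ x, (-g) x ∂ν < -q := by rw [integral_neg']; linarith
      filter_upwards [hT.ae_eventually_birkhoffAverage_lt hgm.neg hg.neg hneg] with x hx
      simpa [birkhoffAverage_neg] using hx
  filter_upwards [hupper, hlower] with x hu hl
  refine tendsto_order.2 ⟨fun a ha => ?_, fun b hb => ?_⟩
  · obtain ⟨q, haq, hqI⟩ := exists_rat_btwn ha
    exact (hl q hqI).mono fun n hn => haq.trans hn
  · obtain ⟨q, hIq, hqb⟩ := exists_rat_btwn hb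
    exact (hu q hIq).mono fun n hn => hn.trans hqb

end Birkhoff

section Shift

lemma measurable_shift : Measurable shift :=
  measurable_pi_lambda _ fun n => measurable_pi_apply (n + 1)

lemma shift_iterate_apply (i : ℕ) (x : ℕ → ℝ) (j : ℕ) : shift^[i] x j = x (j + i) := by
  induction i generalizing x with
  | zero => rfl
  | succ i ih =>
    rw [Function.iterate_succ_apply, ih]
    exact congrArg x (by omega)

lemma birkhoffSum_shift_comp_eval_zero (F : ℝ → ℝ) (n : ℕ) (x : ℕ → ℝ) :
    birkhoffSum shift (fun y => F (y 0)) n x = ∑ i ∈ Finset.range n, F (x i) := by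
  simp only [birkhoffSum, shift_iterate_apply, zero_add]

variable {μ ν : Measure (ℕ → ℝ)}

/-- Seeing these Cesàro averages as Birkhoff averages of `F ↦ shift ⁻¹' F` turns invariant sets
into fixed points, and the invariance of `ν` into `tendsto_birkhoffAverage_apply_iff`. -/
lemma HasStationaryMean.tendsto_birkhoffAverage (h : HasStationaryMean μ ν) {F : Set (ℕ → ℝ)}
    (hF : MeasurableSet F) :
    Tendsto (birkhoffAverage ℝ (preimage shift) (fun G => (μ G).toReal) · F) atTop
      (𝓝 (ν F).toReal) := by
  refine (h F hF).congr fun n => ?_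
  simp only [birkhoffAverage, birkhoffSum, ← Set.preimage_iterate_eq, smul_eq_mul,
    inv_mul_eq_div]

variable [IsFiniteMeasure ν]

lemma HasStationaryMean.measurePreserving (h : HasStationaryMean μ ν) :
    MeasurePreserving shift ν ν := by
  refine ⟨measurable_shift, Measure.ext fun F hF => ?_⟩
  rw [Measure.map_apply measurable_shift hF]
  exact (ENNReal.toReal_eq_toReal_iff' (measure_ne_top _ _) (measure_ne_top _ _)).1 <|
    tendsto_nhds_unique (h.tendsto_birkhoffAverage (measurable_shift hF))
      (tendsto_birkhoffAverage_apply_iff.2 (h.tendsto_birkhoffAverage hF))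

variable [IsFiniteMeasure μ]

lemma HasStationaryMean.measure_eq_of_preimage_eq (h : HasStationaryMean μ ν)
    {F : Set (ℕ → ℝ)} (hF : MeasurableSet F) (hinv : shift ⁻¹' F = F) : μ F = ν F :=
  (ENNReal.toReal_eq_toReal_iff' (measure_ne_top _ _) (measure_ne_top _ _)).1 <|
    tendsto_nhds_unique
      ((show Function.IsFixedPt (preimage shift) F from hinv).tendsto_birkhoffAverage ℝ _)
      (h.tendsto_birkhoffAverage hF)

lemma HasStationaryMean.ae_of_ae_of_preimage_eq (h : HasStationaryMean μ ν)
    {G : Set (ℕ → ℝ)} (hG : MeasurableSet G) (hinv : shift ⁻¹' G = G)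
    (hν : ∀ᵐ x ∂ν, x ∈ G) : ∀ᵐ x ∂μ, x ∈ G := by
  change ν Gᶜ = 0 at hν
  change μ Gᶜ = 0
  rwa [← h.measure_eq_of_preimage_eq hG.compl (by rw [preimage_compl, hinv])] at hν

lemma HasStationaryMean.ergodic [IsProbabilityMeasure ν] (h : HasStationaryMean μ ν)
    (herg : IsErgodicShift μ) : Ergodic shift ν where
  toMeasurePreserving := h.measurePreserving
  aeconst_set F hF hinv := by
    rw [eventuallyConst_set', ae_eq_empty, ae_eq_univ, prob_compl_eq_zero_iff hF,
      ← h.measure_eq_of_preimage_eq hF hinv]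
    exact herg F hF hinv

theorem HasStationaryMean.ae_tendsto_birkhoffAverage [IsProbabilityMeasure ν]
    (h : HasStationaryMean μ ν) (herg : IsErgodicShift μ) {f : (ℕ → ℝ) → ℝ} (hfm : Measurable f)
    (hf : Integrable f ν) :
    ∀ᵐ x ∂μ, Tendsto (birkhoffAverage ℝ shift f · x) atTop (𝓝 (∫ y, f y ∂ν)) :=
  h.ae_of_ae_of_preimage_eq
    (measurableSet_tendsto _ (measurable_shift.birkhoffAverage hfm))
    (Set.ext fun _ => tendsto_birkhoffAverage_apply_iff)
    ((h.ergodic herg).ae_tendsto_birkhoffAverage hfm hf)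

theorem HasStationaryMean.ae_tendsto_sum_div [IsProbabilityMeasure ν]
    (h : HasStationaryMean μ ν) (herg : IsErgodicShift μ) {F : ℝ → ℝ} (hFm : Measurable F)
    (hF : Integrable F (marginal1 ν)) :
    ∀ᵐ x ∂μ, Tendsto (fun n : ℕ => (∑ i ∈ Finset.range n, F (x i)) / n) atTop
      (𝓝 (∫ t, F t ∂(marginal1 ν))) := by
  have heval : Measurable fun y : ℕ → ℝ => y 0 := measurable_pi_apply 0
  rw [marginal1, integral_map heval.aemeasurable hFm.aestronglyMeasurable]
  filter_upwards [h.ae_tendsto_birkhoffAverage herg (hFm.comp heval)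
    (hF.comp_measurable heval)] with x hx
  refine hx.congr fun n => ?_
  rw [birkhoffAverage, Function.comp_def, birkhoffSum_shift_comp_eval_zero, smul_eq_mul,
    inv_mul_eq_div]

end Shift

instance isProbabilityMeasure_marginal1 {ν : Measure (ℕ → ℝ)} [IsProbabilityMeasure ν] :
    IsProbabilityMeasure (marginal1 ν) :=
  Measure.isProbabilityMeasure_map (measurable_pi_apply 0).aemeasurable

section Moments

variable {p : ℝ} {ν : Measure ℝ}

lemma measurable_abs_rpow (p : ℝ) : Measurable fun t : ℝ => |t| ^ p :=
  measurable_abs.pow_const p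

lemma integral_abs_rpow_eq_toReal_momentP : ∫ t, |t| ^ p ∂ν = (momentP p ν).toReal :=
  integral_eq_lintegral_of_nonneg_ae (.of_forall fun t => by positivity)
    (measurable_abs_rpow p).aestronglyMeasurable

lemma integrable_abs_rpow_of_momentP_lt_top (h : momentP p ν < ∞) :
    Integrable (fun t => |t| ^ p) ν :=
  ⟨(measurable_abs_rpow p).aestronglyMeasurable, by
    rwa [hasFiniteIntegral_iff_ofReal (.of_forall fun t => by positivity)]⟩

lemma vP_eq_setIntegral_div_integral (B : Set ℝ) :
    vP p ν B = (∫ t in B, |t| ^ p ∂ν) / ∫ t, |t| ^ p ∂ν := by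
  rw [vP, ENNReal.toReal_div, integral_abs_rpow_eq_toReal_momentP,
    integral_abs_rpow_eq_toReal_momentP]
  rfl

end Moments

theorem ams_ergodic_empirical_tail_convergence_general
    (p : ℝ) (μ ν : Measure (ℕ → ℝ))
    [IsProbabilityMeasure μ] [IsProbabilityMeasure ν]
    (hAMS : HasStationaryMean μ ν) (herg : IsErgodicShift μ)
    (hmom0 : 0 < momentP p (marginal1 ν)) (hmomfin : momentP p (marginal1 ν) < ∞) :
    ∀ τ : ℝ, 0 ≤ τ →
      (∀ᵐ x ∂μ, Tendsto
        (fun n : ℕ => (∑ i ∈ Finset.range n, (Btau τ).indicator (fun _ => (1:ℝ)) (x i)) / n)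
        atTop (𝓝 (phiTail (marginal1 ν) τ))) ∧
      (∀ᵐ x ∂μ, Tendsto
        (fun n : ℕ => (∑ i ∈ Finset.range n, (Btau τ).indicator (fun t => |t| ^ p) (x i)) /
          (∑ i ∈ Finset.range n, |x i| ^ p))
        atTop (𝓝 (vP p (marginal1 ν) (Btau τ)))) := by
  intro τ _
  have hB : MeasurableSet (Btau τ) := measurableSet_Iic.union measurableSet_Ici
  have hint := integrable_abs_rpow_of_momentP_lt_top hmomfin
  have hI : ∫ t, |t| ^ p ∂(marginal1 ν) ≠ 0 := by
    rw [integral_abs_rpow_eq_toReal_momentP]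
    exact (ENNReal.toReal_pos hmom0.ne' hmomfin.ne).ne'
  constructor
  · have := hAMS.ae_tendsto_sum_div herg (measurable_const.indicator hB)
      ((integrable_const (1 : ℝ)).indicator hB)
    rwa [integral_indicator_const _ hB, smul_eq_mul, mul_one] at this
  · filter_upwards [hAMS.ae_tendsto_sum_div herg ((measurable_abs_rpow p).indicator hB)
      (hint.indicator hB), hAMS.ae_tendsto_sum_div herg (measurable_abs_rpow p) hint]
      with x hB_avg hall_avg
    rw [vP_eq_setIntegral_div_integral, ← integral_indicator hB]
    refine (hB_avg.div hall_avg hI).congr' ((eventually_ne_atTop 0).mono fun n hn => ?_)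
    exact div_div_div_cancel_right₀ (Nat.cast_ne_zero.2 hn) _ _

/-- Point-wise ergodic estimates used in the proof of Theorem 1: empirical tail frequencies
and empirical relative `p`-energies converge a.s. to `μ̄₁(B_τ)` and `v_p(B_τ)`. -/
theorem ams_ergodic_empirical_tail_convergence
    (p : ℝ) (hp : 0 < p) (μ ν : Measure (ℕ → ℝ))
    [IsProbabilityMeasure μ] [IsProbabilityMeasure ν]
    (hAMS : HasStationaryMean μ ν) (herg : IsErgodicShift μ)
    (hmom0 : 0 < momentP p (marginal1 ν)) (hmomfin : momentP p (marginal1 ν) < ∞) :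
    ∀ τ : ℝ, 0 ≤ τ →
      (∀ᵐ x ∂μ, Tendsto
        (fun n : ℕ => (∑ i ∈ Finset.range n, (Btau τ).indicator (fun _ => (1:ℝ)) (x i)) / n)
        atTop (𝓝 (phiTail (marginal1 ν) τ))) ∧
      (∀ᵐ x ∂μ, Tendsto
        (fun n : ℕ => (∑ i ∈ Finset.range n, (Btau τ).indicator (fun t => |t| ^ p) (x i)) /
          (∑ i ∈ Finset.range n, |x i| ^ p))
        atTop (𝓝 (vP p (marginal1 ν) (Btau τ)))) :=
  ams_ergodic_empirical_tail_convergence_general p μ ν hAMS herg hmom0 hmomfin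

end
end
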